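/- arXiv:quant-ph/0506099 — 6 statements merged into one kernel-verified Lean document; each statement's English description precedes it below -/
import Mathlib

section
/- Let V be a finite-dimensional real vector space, C ⊆ V a regular cone, λ a linear functional on V with λ(x) > 0 for every x ∈ C∖{0}, and W* a linear subspace of the dual space V* with λ ∈ W*. Let π : V → (W*)* be the restriction map defined by π(η)(a) = a(η) for a ∈ W*. Then D := π(C) is a regular cone in (W*)*, the evaluation functional y ↦ y(λ) is strictly positive on D∖{0}, and π maps {x ∈ C : λ(x) = 1} onto {y ∈ D : y(λ) = 1}. -/
/-!
`D = π '' C` is a linear image of `C`, so it is a convex cone, and it spans because `π` is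
surjective (finite-dimensional reflexivity plus extension of functionals from `W`). Evaluation
at `λ` composed with `π` is `λ` itself, which gives positivity on `D ∖ {0}`, hence pointedness,
and the statement about normalized states. For closedness, `λ` dominates a multiple of the norm
on `C`, so its sublevel sets in `C` are compact, and near any point `D` coincides with the
compact image of such a sublevel set.
-/

/-- Instance-search workaround for current Mathlib (same term as `Submodule.addCommGroup W`). -/
instance stmt_2_addCommGroup_aux {V : Type*} [NormedAddCommGroup V] [NormedSpace ℝ V]
    (W : Submodule ℝ (V →L[ℝ] ℝ)) : AddCommGroup W :=
  Submodule.addCommGroup W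

open Set

section Cone

variable {E F : Type*} [AddCommGroup E] [Module ℝ E] [AddCommGroup F] [Module ℝ F]

theorem smul_mem_image_of_smul_mem {C : Set E} (hC : ∀ t : ℝ, 0 ≤ t → ∀ x ∈ C, t • x ∈ C)
    (f : E →ₗ[ℝ] F) : ∀ t : ℝ, 0 ≤ t → ∀ y ∈ f '' C, t • y ∈ f '' C := by
  rintro t ht _ ⟨x, hx, rfl⟩
  exact ⟨t • x, hC t ht x hx, f.map_smul t x⟩

theorem span_image_eq_top {C : Set E} (hC : Submodule.span ℝ C = ⊤) {f : E →ₗ[ℝ] F}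
    (hf : Function.Surjective f) : Submodule.span ℝ (f '' C) = ⊤ := by
  rw [Submodule.span_image, hC, Submodule.map_top, LinearMap.range_eq_top.2 hf]

theorem pos_of_mem_image {C : Set E} (f : E →ₗ[ℝ] F) (μ : F → ℝ)
    (hC : ∀ x ∈ C, x ≠ 0 → 0 < μ (f x)) : ∀ y ∈ f '' C, y ≠ 0 → 0 < μ y := by
  rintro _ ⟨x, hx, rfl⟩ hfx
  exact hC x hx fun hx0 => hfx (by rw [hx0, map_zero])

theorem inter_neg_eq_zero_of_pos {D : Set F} (hD : (0 : F) ∈ D) (μ : F →ₗ[ℝ] ℝ)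
    (hμ : ∀ y ∈ D, y ≠ 0 → 0 < μ y) : D ∩ -D = {0} := by
  refine eq_singleton_iff_unique_mem.2 ⟨⟨hD, by simpa using hD⟩, ?_⟩
  rintro y ⟨hy, hny⟩
  by_contra hy0
  have hneg : 0 < μ (-y) := hμ (-y) hny (neg_ne_zero.2 hy0)
  rw [map_neg] at hneg
  linarith [hμ y hy hy0]

end Cone

section ClosedCone

variable {V : Type*} [NormedAddCommGroup V] [NormedSpace ℝ V] [ProperSpace V] {C : Set V}

theorem exists_pos_mul_norm_le (hsmul : ∀ t : ℝ, 0 ≤ t → ∀ x ∈ C, t • x ∈ C)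
    (hclosed : IsClosed C) (ℓ : V →L[ℝ] ℝ) (hℓ : ∀ x ∈ C, x ≠ 0 → 0 < ℓ x) :
    ∃ m > 0, ∀ x ∈ C, m * ‖x‖ ≤ ℓ x := by
  have hK : IsCompact (C ∩ Metric.sphere 0 1) :=
    (isCompact_sphere 0 1).of_isClosed_subset (hclosed.inter Metric.isClosed_sphere)
      inter_subset_right
  obtain ⟨m, hm, hmK⟩ := hK.exists_forall_le' ℓ.continuous.continuousOn
    fun x hx => hℓ x hx.1 (ne_zero_of_mem_unit_sphere ⟨x, hx.2⟩)
  refine ⟨m, hm, fun x hx => ?_⟩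
  rcases eq_or_ne x 0 with rfl | hx0
  · simp
  have hnx : 0 < ‖x‖ := norm_pos_iff.2 hx0
  have hunit : ‖x‖⁻¹ • x ∈ C ∩ Metric.sphere 0 1 :=
    ⟨hsmul _ (inv_nonneg.2 hnx.le) x hx, by simp [norm_smul, hnx.ne']⟩
  have := hmK _ hunit
  rw [map_smul, smul_eq_mul, le_inv_mul_iff₀ hnx] at this
  linarith

theorem isCompact_sep_le (hsmul : ∀ t : ℝ, 0 ≤ t → ∀ x ∈ C, t • x ∈ C)
    (hclosed : IsClosed C) (ℓ : V →L[ℝ] ℝ) (hℓ : ∀ x ∈ C, x ≠ 0 → 0 < ℓ x) (r : ℝ) :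
    IsCompact {x ∈ C | ℓ x ≤ r} := by
  obtain ⟨m, hm, hmC⟩ := exists_pos_mul_norm_le hsmul hclosed ℓ hℓ
  refine Metric.isCompact_of_isClosed_isBounded
    (hclosed.inter (isClosed_le ℓ.continuous continuous_const))
    (Metric.isBounded_closedBall (x := 0) (r := r / m) |>.subset fun x hx => ?_)
  rw [mem_closedBall_zero_iff, le_div_iff₀ hm, mul_comm]
  exact (hmC x hx.1).trans hx.2

end ClosedCone

/-- Near a point `y`, the image `f '' C` only meets the compact image of a sublevel set of
`μ ∘ f`, so `y` lies in that image as soon as it lies in the closure of `f '' C`. -/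
theorem isClosed_image_of_isCompact_sep_le {X Y : Type*} [TopologicalSpace X]
    [TopologicalSpace Y] [T2Space Y] {f : X → Y} (hf : Continuous f) {μ : Y → ℝ}
    (hμ : Continuous μ) {C : Set X} (hC : ∀ r, IsCompact {x ∈ C | μ (f x) ≤ r}) :
    IsClosed (f '' C) := by
  refine closure_subset_iff_isClosed.1 fun y hy => ?_
  set r := μ y + 1
  have hU : IsOpen {z | μ z < r} := isOpen_lt hμ continuous_const
  have hsub : {z | μ z < r} ∩ f '' C ⊆ f '' {x ∈ C | μ (f x) ≤ r} := by
    rintro _ ⟨hlt, x, hx, rfl⟩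
    exact ⟨x, ⟨hx, hlt.le⟩, rfl⟩
  have hy' : y ∈ closure (f '' {x ∈ C | μ (f x) ≤ r}) :=
    closure_mono hsub (hU.inter_closure ⟨show μ y < r by linarith, hy⟩)
  rw [((hC r).image hf).isClosed.closure_eq] at hy'
  exact image_mono (sep_subset _ _) hy'

theorem exists_forall_apply_eq {𝕜 V : Type*} [NontriviallyNormedField 𝕜] [CompleteSpace 𝕜]
    [NormedAddCommGroup V] [NormedSpace 𝕜 V] [FiniteDimensional 𝕜 V]
    (G : (V →L[𝕜] 𝕜) →ₗ[𝕜] 𝕜) : ∃ η : V, ∀ a : V →L[𝕜] 𝕜, a η = G a := by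
  refine ⟨(Module.evalEquiv 𝕜 V).symm (G ∘ₗ LinearMap.toContinuousLinearMap.toLinearMap),
    fun a => ?_⟩
  rw [← a.coe_coe, Module.apply_evalEquiv_symm_apply]
  rfl

section Restriction

variable {V : Type*} [NormedAddCommGroup V] [NormedSpace ℝ V]

/-- The restriction map `π : V → (W*)*`, `π η a = a η`. -/
noncomputable def dualRestrict (W : Submodule ℝ (V →L[ℝ] ℝ)) : V →L[ℝ] (W →L[ℝ] ℝ) :=
  ((ContinuousLinearMap.compL ℝ W (V →L[ℝ] ℝ) ℝ).flip W.subtypeL).comp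
    (ContinuousLinearMap.apply ℝ ℝ)

theorem dualRestrict_surjective [FiniteDimensional ℝ V] (W : Submodule ℝ (V →L[ℝ] ℝ)) :
    Function.Surjective (dualRestrict W) := by
  intro g
  obtain ⟨G, hG⟩ := LinearMap.exists_extend (g : W →ₗ[ℝ] ℝ)
  obtain ⟨η, hη⟩ := exists_forall_apply_eq G
  exact ⟨η, ContinuousLinearMap.ext fun a => (hη a).trans (LinearMap.congr_fun hG a)⟩

end Restriction

/-- restriction of the states on a regular cone `C` to a subspace
`W` of the (continuous) dual containing the order unit `lam` yields a regular
cone `D = π(C)` in the dual of `W`, on which evaluation at `lam` is strictly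
positive, and the normalized states of `C` map onto the normalized states of
`D`. -/
theorem stmt_2 {V : Type*} [NormedAddCommGroup V] [NormedSpace ℝ V] [FiniteDimensional ℝ V]
    (C : Set V)
    (hsmul : ∀ t : ℝ, 0 ≤ t → ∀ x ∈ C, t • x ∈ C)
    (hconv : Convex ℝ C)
    (hspan : Submodule.span ℝ C = ⊤)
    (hpointed : C ∩ (-C) = {0})
    (hclosed : IsClosed C)
    (lam : V →L[ℝ] ℝ) (hlam : ∀ x ∈ C, x ≠ 0 → 0 < lam x)
    (W : Submodule ℝ (V →L[ℝ] ℝ)) (hlamW : lam ∈ W)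
    (π : V → (W →L[ℝ] ℝ))
    (hπ : ∀ (η : V) (a : W), π η a = (a : V →L[ℝ] ℝ) η)
    (D : Set (W →L[ℝ] ℝ)) (hD : D = π '' C) :
    (∀ t : ℝ, 0 ≤ t → ∀ y ∈ D, t • y ∈ D) ∧
    Convex ℝ D ∧
    Submodule.span ℝ D = ⊤ ∧
    D ∩ (-D) = {0} ∧
    IsClosed D ∧
    (∀ y ∈ D, y ≠ 0 → 0 < y ⟨lam, hlamW⟩) ∧
    π '' {x ∈ C | lam x = 1} = {y ∈ D | y ⟨lam, hlamW⟩ = 1} := by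
  obtain rfl : π = dualRestrict W := funext fun η => ContinuousLinearMap.ext (hπ η)
  subst hD
  let f := (dualRestrict W : V →ₗ[ℝ] (W →L[ℝ] ℝ))
  -- evaluation at `lam` pulls back to `lam` along `dualRestrict W`, definitionally
  let μ := ContinuousLinearMap.apply ℝ ℝ (⟨lam, hlamW⟩ : W)
  have h0 : (0 : V) ∈ C := (hpointed.symm.subset rfl).1
  have hpos : ∀ y ∈ f '' C, y ≠ 0 → 0 < μ y := pos_of_mem_image f μ hlam
  refine ⟨smul_mem_image_of_smul_mem hsmul f, hconv.linear_image f,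
    span_image_eq_top hspan (dualRestrict_surjective W),
    inter_neg_eq_zero_of_pos ⟨0, h0, map_zero f⟩ μ.toLinearMap hpos,
    isClosed_image_of_isCompact_sep_le (dualRestrict W).continuous μ.continuous
      (isCompact_sep_le hsmul hclosed lam hlam),
    hpos, image_inter_preimage (dualRestrict W) C {y | μ y = 1}⟩
end

section
/- Every regular cone K in a finite-dimensional real vector space is positively generated by its extreme rays: every element of K is a finite nonnegative linear combination of elements lying on extreme rays of K. -/
/-- A ray of a cone `K`: the set of nonnegative multiples of some element of
`K`. -/
def IsRayOf {V : Type*} [AddCommGroup V] [Module ℝ V] (K R : Set V) : Prop :=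
  ∃ x ∈ K, R = {y : V | ∃ t : ℝ, 0 ≤ t ∧ y = t • x}

/-- An extreme ray of a cone `K`: a ray `R` of `K` such that no nonzero element
of `R` is a convex combination of elements of `K` not lying in `R`. -/
def IsExtremeRay {V : Type*} [AddCommGroup V] [Module ℝ V] (K R : Set V) : Prop :=
  IsRayOf K R ∧ ∀ y ∈ R, y ≠ 0 → y ∉ convexHull ℝ (K \ R)

/-!
Induction on the dimension. A cone contained in a proper subspace is treated inside that
subspace. Otherwise the cone has nonempty interior, and a point `p` of `K` outside it has a
supporting functional `g ≤ 0` on `K` with `g p = 0`; the face `K ∩ ker g` lies in a proper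
subspace, and extreme rays of that face are extreme rays of `K`. In dimension at least two,
connectedness of `V \ {0}` gives a direction `u` with `u, -u ∉ K`, and since `K` is closed and
pointed the line `x + ℝ u` leaves `K` on both sides of `x` at non-interior points, so `x` lies on
a segment between two of them. In dimension at most one, every ray of `K` is extreme.
-/

open Set Filter Topology Module

section Cone

variable {V W : Type*} [AddCommGroup V] [Module ℝ V] [AddCommGroup W] [Module ℝ W]

def ray (x : V) : Set V := {y | ∃ t : ℝ, 0 ≤ t ∧ y = t • x}

def extremeRayPoints (K : Set V) : Set V := {v | ∃ R : Set V, IsExtremeRay K R ∧ v ∈ R}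

lemma LinearMap.image_ray (f : W →ₗ[ℝ] V) (x : W) : f '' ray x = ray (f x) := by
  ext y
  simp only [ray, mem_image, mem_ofPred_eq]
  constructor
  · rintro ⟨_, ⟨t, ht, rfl⟩, rfl⟩
    exact ⟨t, ht, map_smul f t x⟩
  · rintro ⟨t, ht, rfl⟩
    exact ⟨t • x, ⟨t, ht, rfl⟩, map_smul f t x⟩

lemma IsExtremeRay.image {f : W →ₗ[ℝ] V} (hf : Function.Injective f) {K R : Set W}
    (h : IsExtremeRay K R) : IsExtremeRay (f '' K) (f '' R) := by
  obtain ⟨⟨x, hx, rfl⟩, hext⟩ := h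
  refine ⟨⟨f x, mem_image_of_mem f hx, f.image_ray x⟩, ?_⟩
  rintro _ ⟨y, hy, rfl⟩ hy0 hmem
  rw [← image_sdiff hf, ← f.image_convexHull, hf.mem_set_image] at hmem
  exact hext y hy (fun h => hy0 (by simp [h])) hmem

lemma image_extremeRayPoints_subset {f : W →ₗ[ℝ] V} (hf : Function.Injective f) (K : Set W) :
    f '' extremeRayPoints K ⊆ extremeRayPoints (f '' K) := by
  rintro _ ⟨v, ⟨R, hR, hvR⟩, rfl⟩
  exact ⟨f '' R, hR.image hf, mem_image_of_mem f hvR⟩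

lemma mem_hull_extremeRayPoints_image {f : W →ₗ[ℝ] V} (hf : Function.Injective f) {K : Set W}
    {w : W} (hw : w ∈ PointedCone.hull ℝ (extremeRayPoints K)) :
    f w ∈ PointedCone.hull ℝ (extremeRayPoints (f '' K)) :=
  Submodule.span_mono (image_extremeRayPoints_subset hf K)
    (Submodule.apply_mem_span_image_of_mem_span (f.restrictScalars _) hw)

lemma convexHull_inter_eq_zero_subset {s : Set V} {g : V →ₗ[ℝ] ℝ} (hg : ∀ z ∈ s, g z ≤ 0) :
    convexHull ℝ s ∩ {z | g z = 0} ⊆ convexHull ℝ (s ∩ {z | g z = 0}) := by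
  rintro _ ⟨hy, hgy⟩
  rw [convexHull_eq] at hy
  obtain ⟨ι, t, w, z, hw0, hw1, hz, rfl⟩ := hy
  have hsum : ∑ i ∈ t, w i * g (z i) = 0 := by
    rw [← hgy, Finset.centerMass_eq_of_sum_1 _ _ hw1, map_sum]
    simp only [map_smul, smul_eq_mul]
  have hterm : ∀ i ∈ t, w i * g (z i) = 0 := (Finset.sum_eq_zero_iff_of_nonpos
    fun i hi => mul_nonpos_of_nonneg_of_nonpos (hw0 i hi) (hg _ (hz i hi))).1 hsum
  rw [← Finset.centerMass_filter_ne_zero]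
  refine Finset.centerMass_mem_convexHull _ (fun i hi => hw0 i (Finset.mem_filter.1 hi).1)
    (by rw [Finset.sum_filter_ne_zero, hw1]; exact one_pos) fun i hi => ?_
  obtain ⟨hit, hwi⟩ := Finset.mem_filter.1 hi
  exact ⟨hz i hit, (mul_eq_zero.1 (hterm i hit)).resolve_left hwi⟩

lemma IsExtremeRay.of_inter_eq_zero {K R : Set V} {g : V →ₗ[ℝ] ℝ} (hg : ∀ z ∈ K, g z ≤ 0)
    (hR : IsExtremeRay (K ∩ {z | g z = 0}) R) : IsExtremeRay K R := by
  obtain ⟨⟨x, ⟨hxK, hgx⟩, rfl⟩, hext⟩ := hR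
  refine ⟨⟨x, hxK, rfl⟩, ?_⟩
  rintro _ ⟨t, ht, rfl⟩ hy0 hmem
  refine hext _ ⟨t, ht, rfl⟩ hy0 ?_
  rw [inter_sdiff_right_comm]
  exact convexHull_inter_eq_zero_subset (fun z hz => hg z hz.1) ⟨hmem, by simp_all⟩

lemma isExtremeRay_ray_of_finrank_le_one [FiniteDimensional ℝ V] (hV : finrank ℝ V ≤ 1)
    {C : PointedCone ℝ V} (hC : ∀ x ∈ C, -x ∈ C → x = 0) {x : V} (hx : x ∈ C) :
    IsExtremeRay C (ray x) := by
  refine ⟨⟨x, hx, rfl⟩, ?_⟩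
  rintro _ ⟨t, ht, rfl⟩ hy0
  have hx0 : x ≠ 0 := by rintro rfl; simp at hy0
  suffices (C : Set V) ⊆ ray x by simp [sdiff_eq_empty.2 this]
  have hV1 : finrank ℝ V = 1 :=
    le_antisymm hV (finrank_pos_iff_exists_ne_zero.2 ⟨x, hx0⟩)
  intro z hz
  obtain ⟨c, rfl⟩ := (finrank_eq_one_iff_of_nonzero' x hx0).1 hV1 z
  rcases le_total 0 c with hc | hc
  · exact ⟨c, hc, rfl⟩
  · have : c • x = 0 := hC _ hz (by simpa using C.smul_mem (neg_nonneg.2 hc) hx)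
    exact ⟨0, le_rfl, by simp [this]⟩

end Cone

def ProperCone.ofConvex {V : Type*} [AddCommGroup V] [Module ℝ V] [TopologicalSpace V]
    (K : Set V) (hsmul : ∀ t : ℝ, 0 ≤ t → ∀ x ∈ K, t • x ∈ K) (hconv : Convex ℝ K)
    (h0 : (0 : V) ∈ K) (hclosed : IsClosed K) : ProperCone ℝ V where
  carrier := K
  add_mem' {a b} ha hb := by
    simpa [smul_add, smul_smul] using
      hsmul 2 zero_le_two _ (hconv ha hb (by norm_num) (by norm_num) (add_halves (1 : ℝ)))
  zero_mem' := h0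
  smul_mem' c _ hy := hsmul c c.2 _ hy
  isClosed' := hclosed

lemma IsGreatest.notMem_interior {α : Type*} [LinearOrder α] [TopologicalSpace α] [OrderTopology α]
    [DenselyOrdered α] [NoMaxOrder α] {s : Set α} {a : α} (h : IsGreatest s a) :
    a ∉ interior s := by
  intro ha
  have hs : ∀ᶠ t in 𝓝[>] a, t ∈ s := nhdsWithin_le_nhds (mem_interior_iff_mem_nhds.1 ha)
  obtain ⟨t, hts, hat⟩ := (hs.and self_mem_nhdsWithin).exists
  exact (h.2 hts).not_gt hat

section NormedSpace

variable {V : Type*} [NormedAddCommGroup V] [NormedSpace ℝ V]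

lemma mem_segment_add_smul_neg_add_smul (x u : V) {s t : ℝ} (hs : 0 ≤ s) (ht : 0 ≤ t) :
    x ∈ segment ℝ (x + s • -u) (x + t • u) := by
  have h0 : (0 : ℝ) ∈ segment ℝ (-s) t := by
    rw [segment_eq_Icc (by linarith)]
    exact ⟨by linarith, ht⟩
  have := mem_image_of_mem (AffineMap.lineMap x (x + u)) h0
  rw [image_segment] at this
  simpa [AffineMap.lineMap_apply_module', add_comm] using this

lemma PointedCone.interior_nonempty_of_span_eq_top [FiniteDimensional ℝ V] (C : PointedCone ℝ V)
    (h : Submodule.span ℝ (C : Set V) = ⊤) : (interior (C : Set V)).Nonempty := by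
  rw [C.convex.interior_nonempty_iff_affineSpan_eq_top, ← insert_eq_of_mem C.zero_mem]
  exact SetLike.coe_injective (by rw [affineSpan_insert_zero, h]; rfl)

lemma PointedCone.exists_supporting_functional {C : PointedCone ℝ V} {a p : V}
    (ha : a ∈ interior (C : Set V)) (hp : p ∈ C) (hpi : p ∉ interior (C : Set V)) :
    ∃ g : V →L[ℝ] ℝ, (∀ z ∈ C, g z ≤ 0) ∧ g p = 0 ∧ g a < 0 := by
  obtain ⟨g, hg⟩ := geometric_hahn_banach_open_point C.convex.interior isOpen_interior hpi
  have hle : ∀ z ∈ C, g z ≤ g p := by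
    have : (C : Set V) ⊆ closure (interior C) := by
      rw [C.convex.closure_interior_eq_closure_of_nonempty_interior ⟨a, ha⟩]
      exact subset_closure
    exact fun z hz => closure_minimal (fun y hy => (hg y hy).le)
      (isClosed_le g.continuous continuous_const) (this hz)
  have hgp : g p = 0 := by
    have h2 := hle _ (C.smul_mem zero_le_two hp)
    have h0 := hle 0 C.zero_mem
    simp only [map_smul, smul_eq_mul, map_zero] at h2 h0
    linarith
  exact ⟨g, fun z hz => hgp ▸ hle z hz, hgp, hgp ▸ hg a ha⟩

namespace ProperCone

variable (C : ProperCone ℝ V)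

lemma mem_of_not_bddAbove {x u : V} (h : ¬BddAbove {t : ℝ | x + t • u ∈ C}) : u ∈ C := by
  have hfreq : ∃ᶠ t : ℝ in atTop, t⁻¹ • x + u ∈ C := by
    refine frequently_atTop.2 fun a : ℝ => ?_
    obtain ⟨t, ht, hat⟩ := not_bddAbove_iff.1 h (max a 1)
    have htpos : 0 < t := lt_of_lt_of_le one_pos ((le_max_right a 1).trans hat.le)
    refine ⟨t, (le_max_left a 1).trans hat.le, ?_⟩
    simpa [smul_add, smul_smul, htpos.ne'] using C.smul_mem ht (inv_nonneg.2 htpos.le)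
  have hlim : Tendsto (fun t : ℝ => t⁻¹ • x + u) atTop (𝓝 u) := by
    simpa using ((tendsto_inv_atTop_zero (𝕜 := ℝ)).smul_const x).add_const u
  exact C.isClosed.mem_of_frequently_of_tendsto hfreq hlim

lemma exists_add_smul_mem_notMem_interior {x u : V} (hx : x ∈ C) (hu : u ∉ C) :
    ∃ t : ℝ, 0 ≤ t ∧ x + t • u ∈ C ∧ x + t • u ∉ interior (C : Set V) := by
  set T := {t : ℝ | x + t • u ∈ C}
  have hcont : Continuous fun t : ℝ => x + t • u := by fun_prop
  have h0 : (0 : ℝ) ∈ T := by simpa [T] using hx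
  have hbdd : BddAbove T := by_contra fun h => hu (C.mem_of_not_bddAbove h)
  have hmax : IsGreatest T (sSup T) :=
    ⟨(C.isClosed.preimage hcont).csSup_mem ⟨0, h0⟩ hbdd, fun t ht => le_csSup hbdd ht⟩
  refine ⟨sSup T, le_csSup hbdd h0, hmax.1, fun hint => hmax.notMem_interior ?_⟩
  exact preimage_interior_subset_interior_preimage hcont hint

lemma exists_notMem_and_neg_notMem (hV : 1 < finrank ℝ V) (hC : ∀ x ∈ C, -x ∈ C → x = 0)
    {x : V} (hx : x ∈ C) (hx0 : x ≠ 0) : ∃ u, u ∉ C ∧ -u ∉ C := by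
  have hnx : -x ∉ C := fun h => hx0 (hC x hx h)
  obtain ⟨u, -, hu, hnu⟩ :=
    (isConnected_compl_singleton_of_one_lt_rank (one_lt_rank_of_one_lt_finrank hV) 0).isPreconnected
      (C : Set V)ᶜ {u | -u ∉ C} C.isClosed.isOpen_compl
      (C.isClosed.preimage continuous_neg).isOpen_compl
      (fun u hu => by
        by_contra h
        simp only [mem_union, mem_compl_iff, mem_ofPred_eq, not_or, not_not, SetLike.mem_coe] at h
        exact hu (hC u h.1 h.2))
      ⟨-x, by simpa using hx0, hnx⟩ ⟨x, hx0, by simpa using hnx⟩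
  exact ⟨u, hu, hnu⟩

lemma mem_hull_extremeRayPoints_of_notMem_interior
    (hsubspace : ∀ W : Submodule ℝ V, W ≠ ⊤ → ∀ y ∈ C, y ∈ W →
      y ∈ PointedCone.hull ℝ (extremeRayPoints ((C : Set V) ∩ W)))
    {a p : V} (ha : a ∈ interior (C : Set V)) (hp : p ∈ C) (hpi : p ∉ interior (C : Set V)) :
    p ∈ PointedCone.hull ℝ (extremeRayPoints (C : Set V)) := by
  obtain ⟨g, hg, hgp, hga⟩ := PointedCone.exists_supporting_functional ha hp hpi
  have hker : LinearMap.ker (g : V →ₗ[ℝ] ℝ) ≠ ⊤ := fun h => hga.ne (by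
    simpa using (h ▸ Submodule.mem_top : a ∈ LinearMap.ker (g : V →ₗ[ℝ] ℝ)))
  refine Submodule.span_mono ?_ (hsubspace _ hker p hp hgp)
  rintro v ⟨R, hR, hvR⟩
  exact ⟨R, IsExtremeRay.of_inter_eq_zero (g := (g : V →ₗ[ℝ] ℝ)) hg hR, hvR⟩

theorem le_hull_extremeRayPoints [FiniteDimensional ℝ V] (C : ProperCone ℝ V)
    (hC : ∀ x ∈ C, -x ∈ C → x = 0) :
    (C : PointedCone ℝ V) ≤ PointedCone.hull ℝ (extremeRayPoints (C : Set V)) := by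
  induction hn : finrank ℝ V using Nat.strong_induction_on generalizing V with
  | _ n ih =>
  intro x hx
  have hsubspace : ∀ W : Submodule ℝ V, W ≠ ⊤ → ∀ y ∈ C, y ∈ W →
      y ∈ PointedCone.hull ℝ (extremeRayPoints ((C : Set V) ∩ W)) := by
    intro W hW y hy hyW
    have hD := ih _ (hn ▸ Submodule.finrank_lt hW) (C.comap W.subtypeL)
      (fun z hz hnz => Subtype.ext (hC _ hz hnz)) rfl (x := ⟨y, hyW⟩) hy
    simpa [image_preimage_eq_inter_range] using
      mem_hull_extremeRayPoints_image W.injective_subtype hD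
  by_cases hdim : finrank ℝ V ≤ 1
  · exact PointedCone.subset_hull
      ⟨ray x, isExtremeRay_ray_of_finrank_le_one hdim hC hx, 1, zero_le_one, (one_smul ℝ x).symm⟩
  by_cases hspan : Submodule.span ℝ (C : Set V) = ⊤
  swap
  · simpa [inter_eq_left.2 Submodule.subset_span] using
      hsubspace _ hspan x hx (Submodule.subset_span hx)
  obtain ⟨a, ha⟩ := C.toPointedCone.interior_nonempty_of_span_eq_top hspan
  rcases eq_or_ne x 0 with rfl | hx0
  · exact zero_mem _
  obtain ⟨u, hu, hnu⟩ := C.exists_notMem_and_neg_notMem (by omega) hC hx hx0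
  obtain ⟨t, ht, hp, hpi⟩ := C.exists_add_smul_mem_notMem_interior hx hu
  obtain ⟨s, hs, hq, hqi⟩ := C.exists_add_smul_mem_notMem_interior hx hnu
  exact (PointedCone.convex _).segment_subset
    (C.mem_hull_extremeRayPoints_of_notMem_interior hsubspace ha hq hqi)
    (C.mem_hull_extremeRayPoints_of_notMem_interior hsubspace ha hp hpi)
    (mem_segment_add_smul_neg_add_smul x u hs ht)

end ProperCone

end NormedSpace

theorem stmt_6_general {V : Type*} [NormedAddCommGroup V] [NormedSpace ℝ V] [FiniteDimensional ℝ V]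
    (K : Set V)
    (hsmul : ∀ t : ℝ, 0 ≤ t → ∀ x ∈ K, t • x ∈ K)
    (hconv : Convex ℝ K)
    (hpointed : K ∩ (-K) = {0})
    (hclosed : IsClosed K) :
    ∀ x ∈ K, ∃ (m : ℕ) (c : Fin m → ℝ) (v : Fin m → V),
      (∀ i, 0 ≤ c i) ∧
      (∀ i, ∃ R : Set V, IsExtremeRay K R ∧ v i ∈ R) ∧
      x = ∑ i, c i • v i := by
  intro x hx
  have hsalient : ∀ y ∈ K, -y ∈ K → y = 0 := fun y hy hny =>
    (hpointed.subset ⟨hy, by simpa using hny⟩ : y ∈ ({0} : Set V))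
  have h0 : (0 : V) ∈ K := by simpa using hsmul 0 le_rfl x hx
  obtain ⟨m, c, v, hsum⟩ := Submodule.mem_span_set'.1 <|
    (ProperCone.ofConvex K hsmul hconv h0 hclosed).le_hull_extremeRayPoints hsalient hx
  exact ⟨m, fun i => c i, fun i => v i, fun i => (c i).2, fun i => (v i).2, by
    simp_rw [Nonneg.coe_smul, hsum]⟩

/-- every regular cone `K` in a finite-dimensional real vector
space is positively generated by its extreme rays: every element of `K` is a
finite nonnegative linear combination of elements lying on extreme rays of
`K`. -/
theorem stmt_6 {V : Type*} [NormedAddCommGroup V] [NormedSpace ℝ V] [FiniteDimensional ℝ V]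
    (K : Set V)
    (hsmul : ∀ t : ℝ, 0 ≤ t → ∀ x ∈ K, t • x ∈ K)
    (hconv : Convex ℝ K)
    (hspan : Submodule.span ℝ K = ⊤)
    (hpointed : K ∩ (-K) = {0})
    (hclosed : IsClosed K) :
    ∀ x ∈ K, ∃ (m : ℕ) (c : Fin m → ℝ) (v : Fin m → V),
      (∀ i, 0 ≤ c i) ∧
      (∀ i, ∃ R : Set V, IsExtremeRay K R ∧ v i ∈ R) ∧
      x = ∑ i, c i • v i :=
  stmt_6_general K hsmul hconv hpointed hclosed
end

section
/- Let (V, W, C, D, λ, λ̃, π) be a cone-pair. Let G ⊆ V be the topological closure of the set of finite nonnegative linear combinations of elements y ∈ C such that y lies on an extreme ray of C and π(y) lies on an extreme ray of D. Then the set of normalized generalized unentangled states — the closure of the convex hull of those extreme points x of Ĉ := C ∩ {λ = 1} for which π(x) is an extreme point of D̂ := D ∩ {λ̃ = 1} — is exactly G ∩ {x : λ(x) = 1}. -/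
/-- A cone-pair: finite-dimensional real normed spaces `V`, `W`, regular cones
`C ⊆ V`, `D ⊆ W`, linear functionals `lam`, `lam'` strictly positive on
`C \ {0}`, `D \ {0}` respectively, and a linear map `pi` with `pi(C) = D`
mapping the affine plane `{lam = 1}` onto `{lam' = 1}`. -/
structure ConePair (V W : Type*) [NormedAddCommGroup V] [NormedSpace ℝ V]
    [NormedAddCommGroup W] [NormedSpace ℝ W] where
  C : Set V
  D : Set W
  lam : V →ₗ[ℝ] ℝ
  lam' : W →ₗ[ℝ] ℝ
  pi : V →ₗ[ℝ] W
  smul_mem_C : ∀ t : ℝ, 0 ≤ t → ∀ x ∈ C, t • x ∈ C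
  convex_C : Convex ℝ C
  span_C : Submodule.span ℝ C = ⊤
  pointed_C : C ∩ (-C) = {0}
  closed_C : IsClosed C
  smul_mem_D : ∀ t : ℝ, 0 ≤ t → ∀ y ∈ D, t • y ∈ D
  convex_D : Convex ℝ D
  span_D : Submodule.span ℝ D = ⊤
  pointed_D : D ∩ (-D) = {0}
  closed_D : IsClosed D
  lam_pos : ∀ x ∈ C, x ≠ 0 → 0 < lam x
  lam'_pos : ∀ y ∈ D, y ≠ 0 → 0 < lam' y
  pi_image : pi '' C = D
  pi_plane : pi '' {x : V | lam x = 1} = {y : W | lam' y = 1}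

/-- The set of finite nonnegative linear combinations of elements of `S`. -/
def nonnegCombos {V : Type*} [AddCommGroup V] [Module ℝ V] (S : Set V) : Set V :=
  {x : V | ∃ (m : ℕ) (c : Fin m → ℝ) (v : Fin m → V),
    (∀ i, 0 ≤ c i) ∧ (∀ i, v i ∈ S) ∧ x = ∑ i, c i • v i}

/-!
Normalizing by `lam` identifies the points of a cone lying on extreme rays with the extreme
points of its slice `{lam = 1}`: a point of the slice that is a convex combination of points of
the cone off its ray is, after rescaling those points into the slice, a convex combination of
other points of the slice, and conversely. Hence the points at level one of the generating set in
the statement are exactly the doubly extreme points `E`, so the cone it generates has slice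
`convexHull E`. Taking closures commutes with slicing because near the slice `y ↦ y / lam y` is
continuous and maps the cone into its slice.
-/

open Set

section Cones

variable {V : Type*} [AddCommGroup V] [Module ℝ V]

lemma nonnegCombos_eq_hull (S : Set V) :
    nonnegCombos S = (PointedCone.hull ℝ S : Set V) := by
  ext x
  constructor
  · rintro ⟨m, c, v, hc, hv, rfl⟩
    exact Submodule.sum_mem _ fun i _ ↦
      PointedCone.smul_mem _ (hc i) (PointedCone.subset_hull (hv i))
  · intro hx
    obtain ⟨n, f, g, rfl⟩ := Submodule.mem_span_set'.mp hx
    exact ⟨n, fun i ↦ f i, fun i ↦ g i, fun i ↦ (f i).2, fun i ↦ (g i).2, rfl⟩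

lemma convexHull_subset_hull (S : Set V) : convexHull ℝ S ⊆ PointedCone.hull ℝ S :=
  convexHull_min PointedCone.subset_hull (PointedCone.convex _)

lemma mem_convexHull_of_mem_hull_of_lam_eq_one {T : Set V} {lam : V →ₗ[ℝ] ℝ}
    (hT : T ⊆ {z | lam z = 1}) {x : V} (hx : x ∈ PointedCone.hull ℝ T) (hx1 : lam x = 1) :
    x ∈ convexHull ℝ T := by
  obtain ⟨n, f, g, rfl⟩ := Submodule.mem_span_set'.mp hx
  change lam (∑ i, (f i : ℝ) • (g i : V)) = 1 at hx1
  have hg : ∀ i, lam (g i) = 1 := fun i ↦ hT (g i).2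
  have hsum : ∑ i, (f i : ℝ) = 1 := by
    simpa only [map_sum, map_smul, smul_eq_mul, hg, mul_one] using hx1
  exact (convex_convexHull ℝ T).sum_mem (fun i _ ↦ (f i).2) hsum
    fun i _ ↦ subset_convexHull ℝ T (g i).2

variable {S : Set V} {lam : V →ₗ[ℝ] ℝ}

lemma hull_eq_hull_inter_level (hsmul : ∀ t : ℝ, 0 < t → ∀ v ∈ S, t • v ∈ S)
    (hpos : ∀ v ∈ S, v ≠ 0 → 0 < lam v) :
    PointedCone.hull ℝ S = PointedCone.hull ℝ (S ∩ {z | lam z = 1}) := by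
  refine le_antisymm (Submodule.span_le.mpr fun v hv ↦ ?_)
    (Submodule.span_mono inter_subset_left)
  obtain rfl | hv0 := eq_or_ne v 0
  · exact zero_mem _
  have hlv := hpos v hv hv0
  have hu : (lam v)⁻¹ • v ∈ S ∩ {z | lam z = 1} :=
    ⟨hsmul _ (inv_pos.mpr hlv) v hv, by simp [hlv.ne']⟩
  simpa [smul_smul, hlv.ne'] using
    PointedCone.smul_mem _ hlv.le (PointedCone.subset_hull hu)

lemma mem_convexHull_inter_level_of_mem_hull (hsmul : ∀ t : ℝ, 0 < t → ∀ v ∈ S, t • v ∈ S)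
    (hpos : ∀ v ∈ S, v ≠ 0 → 0 < lam v) {x : V} (hx : x ∈ PointedCone.hull ℝ S)
    (hx1 : lam x = 1) : x ∈ convexHull ℝ (S ∩ {z | lam z = 1}) :=
  mem_convexHull_of_mem_hull_of_lam_eq_one inter_subset_right
    (hull_eq_hull_inter_level hsmul hpos ▸ hx) hx1

lemma convexHull_inter_level_eq (hsmul : ∀ t : ℝ, 0 < t → ∀ v ∈ S, t • v ∈ S)
    (hpos : ∀ v ∈ S, v ≠ 0 → 0 < lam v) :
    convexHull ℝ (S ∩ {z | lam z = 1}) = (PointedCone.hull ℝ S : Set V) ∩ {z | lam z = 1} :=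
  subset_antisymm
    (convexHull_min (inter_subset_inter_left _ PointedCone.subset_hull)
      ((PointedCone.convex _).inter (convex_hyperplane lam.isLinear 1)))
    fun _ hx ↦ mem_convexHull_inter_level_of_mem_hull hsmul hpos hx.1 hx.2

end Cones

namespace IsRayOf

variable {V : Type*} [AddCommGroup V] [Module ℝ V] {K R : Set V}

lemma smul_mem (hR : IsRayOf K R) {y : V} (hy : y ∈ R) {t : ℝ} (ht : 0 ≤ t) : t • y ∈ R := by
  obtain ⟨x, -, rfl⟩ := hR
  obtain ⟨s, hs, rfl⟩ := hy
  exact ⟨t * s, mul_nonneg ht hs, smul_smul t s x⟩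

lemma eq_of_lam_eq_one (hR : IsRayOf K R) {lam : V →ₗ[ℝ] ℝ} {y z : V} (hy : y ∈ R)
    (hz : z ∈ R) (hy1 : lam y = 1) (hz1 : lam z = 1) : y = z := by
  obtain ⟨x, -, rfl⟩ := hR
  obtain ⟨s, -, rfl⟩ := hy
  obtain ⟨t, -, rfl⟩ := hz
  rw [map_smul, smul_eq_mul] at hy1 hz1
  have hx : lam x ≠ 0 := right_ne_zero_of_mul_eq_one hy1
  rw [mul_right_cancel₀ hx (hy1.trans hz1.symm)]

end IsRayOf

section ExtremeRays

variable {V : Type*} [AddCommGroup V] [Module ℝ V] {K : Set V} {lam : V →ₗ[ℝ] ℝ}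

lemma mem_extremePoints_inter_level_of_mem_extremeRay (hK : Convex ℝ K) {R : Set V}
    (hR : IsExtremeRay K R) {x : V} (hxK : x ∈ K) (hx1 : lam x = 1) (hxR : x ∈ R) :
    x ∈ extremePoints ℝ (K ∩ {z | lam z = 1}) := by
  rw [(hK.inter (convex_hyperplane lam.isLinear 1)
    ).mem_extremePoints_iff_mem_sdiff_convexHull_sdiff]
  refine ⟨⟨hxK, hx1⟩, fun hx ↦ hR.2 x hxR (by rintro rfl; simp at hx1) (convexHull_mono ?_ hx)⟩
  rintro z ⟨⟨hzK, hz1⟩, hzx⟩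
  exact ⟨hzK, fun hzR ↦ hzx (hR.1.eq_of_lam_eq_one hzR hxR hz1 hx1)⟩

lemma exists_extremeRay_of_mem_extremePoints_inter_level (hK : Convex ℝ K)
    (hsmul : ∀ t : ℝ, 0 ≤ t → ∀ x ∈ K, t • x ∈ K) (hpos : ∀ x ∈ K, x ≠ 0 → 0 < lam x) {x : V}
    (hx : x ∈ extremePoints ℝ (K ∩ {z | lam z = 1})) : ∃ R, IsExtremeRay K R ∧ x ∈ R := by
  obtain ⟨⟨hxK, hx1⟩, hx_notMem⟩ := (hK.inter (convex_hyperplane lam.isLinear 1)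
    ).mem_extremePoints_iff_mem_sdiff_convexHull_sdiff.mp hx
  set R : Set V := {y | ∃ t : ℝ, 0 ≤ t ∧ y = t • x}
  have hR : IsRayOf K R := ⟨x, hxK, rfl⟩
  have hxR : x ∈ R := ⟨1, zero_le_one, (one_smul ℝ x).symm⟩
  refine ⟨R, ⟨hR, ?_⟩, hxR⟩
  rintro _ ⟨t, ht, rfl⟩ hy0 hy
  have htpos : 0 < t := ht.lt_of_ne (by rintro rfl; simp at hy0)
  have hsmul' : ∀ s : ℝ, 0 < s → ∀ z ∈ K \ R, s • z ∈ K \ R := fun s hs z hz ↦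
    ⟨hsmul s hs.le z hz.1, fun h ↦ hz.2 (by
      simpa [smul_smul, hs.ne'] using hR.smul_mem h (inv_nonneg.mpr hs.le))⟩
  have hx_hull : x ∈ PointedCone.hull ℝ (K \ R) := by
    simpa [smul_smul, htpos.ne'] using
      PointedCone.smul_mem _ (inv_nonneg.mpr ht) (convexHull_subset_hull _ hy)
  refine hx_notMem (convexHull_mono ?_ (mem_convexHull_inter_level_of_mem_hull hsmul'
    (fun z hz ↦ hpos z hz.1) hx_hull hx1))
  rintro z ⟨⟨hzK, hzR⟩, hz1⟩
  exact ⟨⟨hzK, hz1⟩, by rintro rfl; exact hzR hxR⟩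

lemma mem_extremePoints_inter_level_iff (hK : Convex ℝ K)
    (hsmul : ∀ t : ℝ, 0 ≤ t → ∀ x ∈ K, t • x ∈ K) (hpos : ∀ x ∈ K, x ≠ 0 → 0 < lam x) {x : V} :
    x ∈ extremePoints ℝ (K ∩ {z | lam z = 1}) ↔
      (x ∈ K ∧ lam x = 1) ∧ ∃ R, IsExtremeRay K R ∧ x ∈ R :=
  ⟨fun hx ↦ ⟨hx.1, exists_extremeRay_of_mem_extremePoints_inter_level hK hsmul hpos hx⟩,
    fun ⟨⟨hxK, hx1⟩, _, hR, hxR⟩ ↦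
      mem_extremePoints_inter_level_of_mem_extremeRay hK hR hxK hx1 hxR⟩

end ExtremeRays

lemma closure_pointedCone_inter_level {V : Type*} [AddCommGroup V] [Module ℝ V]
    [TopologicalSpace V] [ContinuousSMul ℝ V] (N : PointedCone ℝ V) {lam : V →ₗ[ℝ] ℝ}
    (hlam : Continuous lam) :
    closure ((N : Set V) ∩ {z | lam z = 1}) = closure N ∩ {z | lam z = 1} := by
  have hL : IsClosed {z : V | lam z = 1} := isClosed_eq hlam continuous_const
  refine subset_antisymm (fun x hx ↦ ⟨closure_mono inter_subset_left hx,
    hL.closure_subset (closure_mono inter_subset_right hx)⟩) ?_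
  rintro x ⟨hxN, hx1 : lam x = 1⟩
  have hx_pos : x ∈ closure ({y | 0 < lam y} ∩ N) :=
    (isOpen_lt continuous_const hlam).inter_closure ⟨by simp [hx1], hxN⟩
  have hnormalize : ContinuousAt (fun y ↦ (lam y)⁻¹ • y) x :=
    (hlam.continuousAt.inv₀ (by simp [hx1])).smul continuousAt_id
  have := mem_closure_image hnormalize hx_pos
  rw [hx1, inv_one, one_smul] at this
  refine closure_mono ?_ this
  rintro _ ⟨y, ⟨hy : 0 < lam y, hyN⟩, rfl⟩
  exact ⟨N.smul_mem (inv_nonneg.mpr hy.le) hyN, by simp [hy.ne']⟩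

namespace ConePair

variable {V W : Type*} [NormedAddCommGroup V] [NormedSpace ℝ V] [NormedAddCommGroup W]
  [NormedSpace ℝ W] (P : ConePair V W)

lemma pi_mem_D {x : V} (hx : x ∈ P.C) : P.pi x ∈ P.D :=
  P.pi_image ▸ mem_image_of_mem _ hx

lemma lam'_pi_eq_one {x : V} (hx : P.lam x = 1) : P.lam' (P.pi x) = 1 := by
  have : P.pi x ∈ P.pi '' {x | P.lam x = 1} := mem_image_of_mem _ hx
  rwa [P.pi_plane] at this

end ConePair

theorem stmt_8_general {V W : Type*} [NormedAddCommGroup V] [NormedSpace ℝ V] [FiniteDimensional ℝ V]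
    [NormedAddCommGroup W] [NormedSpace ℝ W]
    (P : ConePair V W)
    (G : Set V)
    (hG : G = closure (nonnegCombos
      {y : V | y ∈ P.C ∧ (∃ R : Set V, IsExtremeRay P.C R ∧ y ∈ R) ∧
        (∃ R' : Set W, IsExtremeRay P.D R' ∧ P.pi y ∈ R')})) :
    closure (convexHull ℝ
      {x : V | x ∈ Set.extremePoints ℝ (P.C ∩ {z : V | P.lam z = 1}) ∧
        P.pi x ∈ Set.extremePoints ℝ (P.D ∩ {y : W | P.lam' y = 1})}) =
    G ∩ {x : V | P.lam x = 1} := by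
  set S := {y : V | y ∈ P.C ∧ (∃ R : Set V, IsExtremeRay P.C R ∧ y ∈ R) ∧
    (∃ R' : Set W, IsExtremeRay P.D R' ∧ P.pi y ∈ R')}
  have hsmul : ∀ t : ℝ, 0 < t → ∀ y ∈ S, t • y ∈ S := by
    rintro t ht y ⟨hyC, ⟨R, hR, hyR⟩, R', hR', hyR'⟩
    exact ⟨P.smul_mem_C t ht.le y hyC, ⟨R, hR, hR.1.smul_mem hyR ht.le⟩,
      R', hR', by simpa using hR'.1.smul_mem hyR' ht.le⟩
  have hE : {x | x ∈ extremePoints ℝ (P.C ∩ {z | P.lam z = 1}) ∧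
      P.pi x ∈ extremePoints ℝ (P.D ∩ {y | P.lam' y = 1})} = S ∩ {x | P.lam x = 1} := by
    ext x
    rw [mem_ofPred_eq, mem_extremePoints_inter_level_iff P.convex_C P.smul_mem_C P.lam_pos,
      mem_extremePoints_inter_level_iff P.convex_D P.smul_mem_D P.lam'_pos]
    exact ⟨fun ⟨⟨⟨hxC, hx1⟩, hray⟩, _, hray'⟩ ↦ ⟨⟨hxC, hray, hray'⟩, hx1⟩,
      fun ⟨⟨hxC, hray, hray'⟩, hx1⟩ ↦
        ⟨⟨⟨hxC, hx1⟩, hray⟩, ⟨P.pi_mem_D hxC, P.lam'_pi_eq_one hx1⟩, hray'⟩⟩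
  rw [hE, convexHull_inter_level_eq hsmul (fun y hy ↦ P.lam_pos y hy.1), hG,
    nonnegCombos_eq_hull, closure_pointedCone_inter_level _ P.lam.continuous_of_finiteDimensional]

/-- for a cone-pair, let `G` be the closure of the set of finite
nonnegative linear combinations of elements `y ∈ C` lying on an extreme ray of
`C` whose image `π(y)` lies on an extreme ray of `D`.  Then the set of
normalized generalized unentangled states — the closure of the convex hull of
the extreme points `x` of `Ĉ = C ∩ {lam = 1}` with `π(x)` extreme in
`D̂ = D ∩ {lam' = 1}` — equals `G ∩ {lam = 1}`. -/
theorem stmt_8 {V W : Type*} [NormedAddCommGroup V] [NormedSpace ℝ V] [FiniteDimensional ℝ V]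
    [NormedAddCommGroup W] [NormedSpace ℝ W] [FiniteDimensional ℝ W]
    (P : ConePair V W)
    (G : Set V)
    (hG : G = closure (nonnegCombos
      {y : V | y ∈ P.C ∧ (∃ R : Set V, IsExtremeRay P.C R ∧ y ∈ R) ∧
        (∃ R' : Set W, IsExtremeRay P.D R' ∧ P.pi y ∈ R')})) :
    closure (convexHull ℝ
      {x : V | x ∈ Set.extremePoints ℝ (P.C ∩ {z : V | P.lam z = 1}) ∧
        P.pi x ∈ Set.extremePoints ℝ (P.D ∩ {y : W | P.lam' y = 1})}) =
    G ∩ {x : V | P.lam x = 1} :=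
  stmt_8_general P G hG
end

section
/- Let S be an ℝ-linear subspace of the Hermitian n×n complex matrices, and let P_S be the orthogonal projection of the real inner product space of Hermitian matrices (with trace inner product ⟨A,B⟩ = tr(AB)) onto S. Let ρ be a density matrix with tr(ρ²) = 1 and tr((P_S ρ)²) = 1. Then ρ is generalized unentangled relative to S: the functional X ↦ tr(ρX) on S is an extreme point of the convex set of functionals {X ↦ tr(σX) : σ a density matrix}. -/
open scoped ComplexOrder

/-!
Pythagoras for the orthogonal decomposition `ρ = P ρ + (ρ - P ρ)` gives
`tr ((ρ - P ρ)²) = tr (ρ²) - tr ((P ρ)²) = 0`, so `ρ = P ρ ∈ S`.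
For a density matrix `σ` we have `tr (σ²) ≤ (tr σ)² = 1`, hence
`0 ≤ tr ((σ - ρ)²) ≤ 2 - 2 tr (σ ρ)`: the value `tr (σ ρ)` is at most `1`, with equality only
for `σ = ρ`. As `ρ ∈ S`, evaluation at `ρ` is a real linear functional (after taking real parts)
on the functionals `X ↦ tr (σ X)`, maximized exactly at the functional of `ρ`, which is therefore
an exposed, hence extreme, point.
-/

namespace Matrix

variable {n R 𝕜 : Type*} [Fintype n]

theorem trace_sub_mul_sub_self [CommRing R] (A B : Matrix n n R) :
    ((A - B) * (A - B)).trace = (A * A).trace - 2 * (A * B).trace + (B * B).trace := by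
  simp only [sub_mul, mul_sub, trace_sub, trace_mul_comm B A]
  ring

variable [RCLike 𝕜] {A : Matrix n n 𝕜}

theorem IsHermitian.trace_mul_self_nonneg (hA : A.IsHermitian) : 0 ≤ (A * A).trace := by
  simpa only [hA.eq] using (posSemidef_conjTranspose_mul_self A).trace_nonneg

theorem IsHermitian.trace_mul_self_eq_zero_iff (hA : A.IsHermitian) :
    (A * A).trace = 0 ↔ A = 0 := by
  simpa only [hA.eq] using trace_conjTranspose_mul_self_eq_zero_iff (A := A)

theorem IsHermitian.trace_mul_self_eq_sum_sq_eigenvalues [DecidableEq n] (hA : A.IsHermitian) :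
    (A * A).trace = ∑ i, (hA.eigenvalues i : 𝕜) ^ 2 := by
  conv_lhs => rw [hA.spectral_theorem, ← map_mul, Unitary.conjStarAlgAut_apply, trace_mul_cycle,
    Unitary.coe_star_mul_self, one_mul, diagonal_mul_diagonal, trace_diagonal]
  simp [sq]

theorem PosSemidef.trace_mul_self_le_sq_trace (hA : A.PosSemidef) :
    (A * A).trace ≤ A.trace ^ 2 := by
  classical
  rw [hA.1.trace_mul_self_eq_sum_sq_eigenvalues, hA.1.trace_eq_sum_eigenvalues]
  exact Finset.sum_sq_le_sq_sum_of_nonneg fun i _ ↦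
    RCLike.ofReal_nonneg.mpr (hA.eigenvalues_nonneg i)

theorem IsHermitian.eq_of_trace_sub_mul_eq_zero {B : Matrix n n 𝕜} (hA : A.IsHermitian)
    (hB : B.IsHermitian) (horth : ((A - B) * B).trace = 0)
    (h : (A * A).trace = (B * B).trace) : A = B := by
  have hAB : (A * B).trace = (B * B).trace := by
    rwa [sub_mul, trace_sub, sub_eq_zero] at horth
  have : ((A - B) * (A - B)).trace = 0 := by
    rw [trace_sub_mul_sub_self, hAB, h]
    ring
  exact sub_eq_zero.mp ((hA.sub hB).trace_mul_self_eq_zero_iff.mp this)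

section DensityMatrix

variable {σ ρ : Matrix n n 𝕜}

theorem PosSemidef.trace_sub_mul_sub_self_add_two_mul_trace_mul_le (hσ : σ.PosSemidef)
    (hσtr : σ.trace = 1) (hρρ : (ρ * ρ).trace = 1) :
    ((σ - ρ) * (σ - ρ)).trace + 2 * (σ * ρ).trace ≤ 2 := by
  have := hσ.trace_mul_self_le_sq_trace
  rw [hσtr, one_pow] at this
  calc ((σ - ρ) * (σ - ρ)).trace + 2 * (σ * ρ).trace = (σ * σ).trace + 1 := by
        rw [trace_sub_mul_sub_self, hρρ]; ring
    _ ≤ 2 := by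
        rw [← one_add_one_eq_two]
        exact add_le_add_left this 1

theorem PosSemidef.trace_mul_le_one (hσ : σ.PosSemidef) (hσtr : σ.trace = 1)
    (hρ : ρ.IsHermitian) (hρρ : (ρ * ρ).trace = 1) : (σ * ρ).trace ≤ 1 := by
  have h : 2 * (σ * ρ).trace ≤ 2 * 1 := by
    rw [mul_one]
    exact (le_add_of_nonneg_left (hσ.1.sub hρ).trace_mul_self_nonneg).trans
      (hσ.trace_sub_mul_sub_self_add_two_mul_trace_mul_le hσtr hρρ)
  exact le_of_mul_le_mul_left h two_pos

theorem PosSemidef.eq_of_trace_mul_eq_one (hσ : σ.PosSemidef) (hσtr : σ.trace = 1)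
    (hρ : ρ.IsHermitian) (hρρ : (ρ * ρ).trace = 1) (h : (σ * ρ).trace = 1) : σ = ρ := by
  have := hσ.trace_sub_mul_sub_self_add_two_mul_trace_mul_le hσtr hρρ
  rw [h, mul_one, add_le_iff_nonpos_left] at this
  exact sub_eq_zero.mp <| (hσ.1.sub hρ).trace_mul_self_eq_zero_iff.mp <|
    le_antisymm this (hσ.1.sub hρ).trace_mul_self_nonneg

theorem PosSemidef.trace_mul_mem_exposedPoints (S : Submodule ℝ (Matrix n n 𝕜))
    (hρ : ρ.PosSemidef) (hρtr : ρ.trace = 1) (hρρ : (ρ * ρ).trace = 1)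
    (hρS : ρ ∈ S) :
    (fun X : S => (ρ * (X : Matrix n n 𝕜)).trace) ∈ Set.exposedPoints ℝ
      {f : S → 𝕜 | ∃ σ : Matrix n n 𝕜, σ.PosSemidef ∧ σ.trace = 1 ∧
        f = fun X : S => (σ * (X : Matrix n n 𝕜)).trace} := by
  refine ⟨⟨ρ, hρ, hρtr, rfl⟩,
    RCLike.reCLM.comp (ContinuousLinearMap.proj (R := ℝ) (φ := fun _ : S ↦ 𝕜) ⟨ρ, hρS⟩), ?_⟩
  rintro _ ⟨σ, hσ, hσtr, rfl⟩
  have hle := hσ.trace_mul_le_one hσtr hρ.1 hρρ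
  simp only [ContinuousLinearMap.comp_apply, ContinuousLinearMap.proj_apply, RCLike.reCLM_apply,
    hρρ]
  refine ⟨RCLike.re_le_re hle, fun hre ↦ ?_⟩
  have hge : 1 ≤ (σ * ρ).trace :=
    RCLike.le_iff_re_im.mpr ⟨hre, (RCLike.le_iff_re_im.mp hle).2.symm⟩
  rw [hσ.eq_of_trace_mul_eq_one hσtr hρ.1 hρρ (le_antisymm hle hge)]

end DensityMatrix

end Matrix

/-- let `S` be an `ℝ`-linear subspace of the Hermitian `n × n`
complex matrices and `P` the orthogonal projection (for the trace inner product
`⟨A, B⟩ = tr (A * B)` on Hermitian matrices) onto `S`, characterized by: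
`P A ∈ S` and `A - P A ⊥ S` for every Hermitian `A`.  If `ρ` is a density
matrix with `tr (ρ²) = 1` and `tr ((P ρ)²) = 1`, then `ρ` is generalized
unentangled relative to `S`: the functional `X ↦ tr (ρ X)` on `S` is an
extreme point of the convex set of functionals induced by density matrices. -/
theorem stmt_12 {n : ℕ} (S : Submodule ℝ (Matrix (Fin n) (Fin n) ℂ))
    (hS : ∀ A ∈ S, A.IsHermitian)
    (P : Matrix (Fin n) (Fin n) ℂ → Matrix (Fin n) (Fin n) ℂ)
    (hP_mem : ∀ A : Matrix (Fin n) (Fin n) ℂ, A.IsHermitian → P A ∈ S)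
    (hP_orth : ∀ A : Matrix (Fin n) (Fin n) ℂ, A.IsHermitian →
      ∀ X ∈ S, ((A - P A) * X).trace = 0)
    (ρ : Matrix (Fin n) (Fin n) ℂ)
    (hρ : ρ.PosSemidef) (hρtr : ρ.trace = 1)
    (hpure : (ρ * ρ).trace = 1)
    (hpurity : (P ρ * P ρ).trace = 1) :
    (fun X : S => (ρ * (X : Matrix (Fin n) (Fin n) ℂ)).trace) ∈
      Set.extremePoints ℝ
        {f : S → ℂ | ∃ σ : Matrix (Fin n) (Fin n) ℂ, σ.PosSemidef ∧ σ.trace = 1 ∧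
          f = fun X : S => (σ * (X : Matrix (Fin n) (Fin n) ℂ)).trace} := by
  have hPρ : P ρ ∈ S := hP_mem ρ hρ.1
  have hρP : ρ = P ρ := hρ.1.eq_of_trace_sub_mul_eq_zero (hS _ hPρ) (hP_orth ρ hρ.1 _ hPρ)
    (hpure.trans hpurity.symm)
  exact exposedPoints_subset_extremePoints <|
    hρ.trace_mul_mem_exposedPoints S hρtr hpure (hρP ▸ hPρ)
end

section
/- Let S be an ℝ-linear subspace of the Hermitian n×n complex matrices, and let P_S be the orthogonal projection of the real inner product space of Hermitian matrices (with trace inner product ⟨A,B⟩ = tr(AB)) onto S. Let ρ be a density matrix whose purity relative to S is maximal: tr((P_S ρ)²) ≥ tr((P_S σ)²) for every density matrix σ. Then P_S ρ is an extreme point of the convex set {P_S σ : σ a density matrix}; that is, ρ is generalized unentangled relative to S. -/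
open scoped ComplexOrder

/-!
Purity `M ↦ re tr (M²)` is strictly convex on Hermitian matrices: its defect on a convex
combination `a X + b Y` is `a b re tr ((X - Y)²)`, and `tr (Z²) = tr (Zᴴ Z) > 0` for Hermitian
`Z ≠ 0`. A maximizer of a strictly convex function over a set cannot lie inside an open segment
of that set, so it is an extreme point.
-/

theorem StrictConvexOn.mem_extremePoints_of_isMaxOn {𝕜 E β : Type*} [Semiring 𝕜]
    [PartialOrder 𝕜] [AddCommMonoid E] [AddCommMonoid β] [LinearOrder β]
    [IsOrderedAddMonoid β] [Module 𝕜 E] [Module 𝕜 β] [PosSMulStrictMono 𝕜 β]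
    {s A : Set E} {f : E → β} {x : E} (hf : StrictConvexOn 𝕜 s f) (hAs : A ⊆ s)
    (hx : x ∈ A) (hmax : IsMaxOn f A x) : x ∈ A.extremePoints 𝕜 := by
  refine ⟨hx, fun x₁ hx₁ x₂ hx₂ hseg => ?_⟩
  by_cases h₁₂ : x₁ = x₂
  · subst h₁₂
    obtain ⟨a, b, -, -, hab, rfl⟩ := hseg
    rw [← add_smul, hab, one_smul]
  · exact ((hf.lt_on_openSegment (hAs hx₁) (hAs hx₂) h₁₂ hseg).trans_le
      (max_le (hmax hx₁) (hmax hx₂))).false.elim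

namespace Matrix

variable {ι : Type*} [Fintype ι]

theorem IsHermitian.re_trace_mul_self_pos {Z : Matrix ι ι ℂ} (hZ : Z.IsHermitian) (h : Z ≠ 0) :
    0 < (Z * Z).trace.re := by
  have hpos : 0 < (Zᴴ * Z).trace :=
    (posSemidef_conjTranspose_mul_self Z).trace_nonneg.lt_of_ne'
      (trace_conjTranspose_mul_self_eq_zero_iff.not.mpr h)
  rw [hZ.eq] at hpos
  exact (Complex.pos_iff.mp hpos).1

theorem re_trace_mul_self_smul_add_smul (X Y : Matrix ι ι ℂ) {a b : ℝ} (hab : a + b = 1) :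
    ((a • X + b • Y) * (a • X + b • Y)).trace.re =
      a * (X * X).trace.re + b * (Y * Y).trace.re - a * b * ((X - Y) * (X - Y)).trace.re := by
  obtain rfl : b = 1 - a := by linarith
  simp only [add_mul, mul_add, sub_mul, mul_sub, smul_mul_assoc, mul_smul_comm, trace_add,
    trace_sub, trace_smul, Complex.add_re, Complex.sub_re, Complex.smul_re,
    trace_mul_comm Y X]
  ring

theorem strictConvexOn_re_trace_mul_self :
    StrictConvexOn ℝ {M : Matrix ι ι ℂ | M.IsHermitian} fun M => (M * M).trace.re := by
  refine ⟨fun X hX Y hY a b _ _ _ => ?_, fun X hX Y hY hXY a b ha hb hab => ?_⟩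
  · exact (hX.smul (IsSelfAdjoint.all a)).add (hY.smul (IsSelfAdjoint.all b))
  · have hpos := (IsHermitian.sub hX hY).re_trace_mul_self_pos (sub_ne_zero.mpr hXY)
    simp only [re_trace_mul_self_smul_add_smul X Y hab, smul_eq_mul]
    linarith [mul_pos (mul_pos ha hb) hpos]

end Matrix

theorem stmt_13_general {n : ℕ} (S : Submodule ℝ (Matrix (Fin n) (Fin n) ℂ))
    (hS : ∀ A ∈ S, A.IsHermitian)
    (P : Matrix (Fin n) (Fin n) ℂ → Matrix (Fin n) (Fin n) ℂ)
    (hP_mem : ∀ A : Matrix (Fin n) (Fin n) ℂ, A.IsHermitian → P A ∈ S)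
    (ρ : Matrix (Fin n) (Fin n) ℂ)
    (hρ : ρ.PosSemidef) (hρtr : ρ.trace = 1)
    (hmax : ∀ σ : Matrix (Fin n) (Fin n) ℂ, σ.PosSemidef → σ.trace = 1 →
      ((P σ * P σ).trace).re ≤ ((P ρ * P ρ).trace).re) :
    P ρ ∈ Set.extremePoints ℝ
      {M : Matrix (Fin n) (Fin n) ℂ | ∃ σ : Matrix (Fin n) (Fin n) ℂ,
        σ.PosSemidef ∧ σ.trace = 1 ∧ M = P σ} := by
  refine Matrix.strictConvexOn_re_trace_mul_self.mem_extremePoints_of_isMaxOn ?_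
    ⟨ρ, hρ, hρtr, rfl⟩ ?_
  · rintro _ ⟨σ, hσ, -, rfl⟩
    exact hS _ (hP_mem σ hσ.isHermitian)
  · rintro _ ⟨σ, hσ, hσtr, rfl⟩
    exact hmax σ hσ hσtr

/-- let `S` be an `ℝ`-linear subspace of the Hermitian `n × n`
complex matrices and `P` the orthogonal projection (for the trace inner product
`⟨A, B⟩ = tr (A * B)` on Hermitian matrices) onto `S`.  If `ρ` is a density
matrix of maximal purity relative to `S`, i.e. `tr ((P ρ)²) ≥ tr ((P σ)²)` for
every density matrix `σ` (the traces being real since `P σ` is Hermitian), then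
`P ρ` is an extreme point of the convex set `{P σ : σ a density matrix}`; that
is, `ρ` is generalized unentangled relative to `S`. -/
theorem stmt_13 {n : ℕ} (S : Submodule ℝ (Matrix (Fin n) (Fin n) ℂ))
    (hS : ∀ A ∈ S, A.IsHermitian)
    (P : Matrix (Fin n) (Fin n) ℂ → Matrix (Fin n) (Fin n) ℂ)
    (hP_mem : ∀ A : Matrix (Fin n) (Fin n) ℂ, A.IsHermitian → P A ∈ S)
    (hP_orth : ∀ A : Matrix (Fin n) (Fin n) ℂ, A.IsHermitian →
      ∀ X ∈ S, ((A - P A) * X).trace = 0)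
    (ρ : Matrix (Fin n) (Fin n) ℂ)
    (hρ : ρ.PosSemidef) (hρtr : ρ.trace = 1)
    (hmax : ∀ σ : Matrix (Fin n) (Fin n) ℂ, σ.PosSemidef → σ.trace = 1 →
      ((P σ * P σ).trace).re ≤ ((P ρ * P ρ).trace).re) :
    P ρ ∈ Set.extremePoints ℝ
      {M : Matrix (Fin n) (Fin n) ℂ | ∃ σ : Matrix (Fin n) (Fin n) ℂ,
        σ.PosSemidef ∧ σ.trace = 1 ∧ M = P σ} :=
  stmt_13_general S hS P hP_mem ρ hρ hρtr hmax
end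

section
/- Let h be a complex Lie subalgebra of the n×n complex matrices that is closed under conjugate transpose, contains the identity matrix, and acts irreducibly on ℂⁿ. Let ρ be a density matrix with tr(ρ²) = 1 (a pure state), and suppose ρ has maximal purity relative to the real subspace Re(h) of Hermitian elements of h: tr((P ρ)²) ≥ tr((P σ)²) for every density matrix σ, where P is the orthogonal projection of the Hermitian matrices (with trace inner product) onto Re(h). Then ρ is generalized unentangled relative to h: the functional λ_ρ : h → ℂ, X ↦ tr(ρX), is an extreme point of the set {λ_σ : σ a density matrix}. -/
/-!
If `λ_ρ = s λ_σ₁ + t λ_σ₂` with `s, t > 0`, then `P ρ = s P σ₁ + t P σ₂`, because a Hermitian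
element of `h` is determined by its traces against the Hermitian elements of `h`. The purity
`tr(A²)` is strictly convex on Hermitian matrices:
`s tr(a²) + t tr(b²) - tr((s a + t b)²) = s t tr((a - b)²)`. Maximality of `tr((P ρ)²)` therefore
forces `P σ₁ = P σ₂ = P ρ`, and `λ_σ` depends only on `P σ` since `h` is spanned by its Hermitian
elements.
-/

open scoped ComplexOrder ComplexStarModule
open Matrix

attribute [local instance 100] LieRing.ofAssociativeRing

namespace Matrix

variable {m : Type*} [Fintype m]

theorem trace_mul_self_convex_combo {R : Type*} [CommRing R] (a b : Matrix m m R) {s t : R}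
    (hst : s + t = 1) :
    s * (a * a).trace + t * (b * b).trace - ((s • a + t • b) * (s • a + t • b)).trace =
      s * t * ((a - b) * (a - b)).trace := by
  have hba : (b * a).trace = (a * b).trace := trace_mul_comm b a
  obtain rfl : t = 1 - s := by rw [← hst]; ring
  simp only [add_mul, mul_add, sub_mul, mul_sub, smul_mul, Matrix.mul_smul, trace_add, trace_sub,
    trace_smul, smul_eq_mul, hba]
  ring

theorem IsHermitian.eq_zero_of_re_trace_mul_self_nonpos {A : Matrix m m ℂ} (hA : A.IsHermitian)
    (h : (A * A).trace.re ≤ 0) : A = 0 := by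
  have hnonneg := (posSemidef_conjTranspose_mul_self A).trace_nonneg
  rw [hA.eq] at hnonneg
  obtain ⟨hre, him⟩ := Complex.nonneg_iff.mp hnonneg
  have hzero : (A * A).trace = 0 := Complex.ext (le_antisymm h hre) him.symm
  exact trace_conjTranspose_mul_self_eq_zero_iff.mp (by rwa [hA.eq])

theorem IsHermitian.eq_of_re_trace_mul_self_le {a b p : Matrix m m ℂ} (ha : a.IsHermitian)
    (hb : b.IsHermitian) {s t : ℝ} (hs : 0 < s) (ht : 0 < t) (hst : s + t = 1)
    (hp : p = (s : ℂ) • a + (t : ℂ) • b)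
    (hap : (a * a).trace.re ≤ (p * p).trace.re) (hbp : (b * b).trace.re ≤ (p * p).trace.re) :
    a = b := by
  have hcombo := congrArg Complex.re
    (trace_mul_self_convex_combo a b (s := (s : ℂ)) (t := t) (by exact_mod_cast hst))
  simp only [Complex.sub_re, Complex.add_re, Complex.re_ofReal_mul, ← Complex.ofReal_mul,
    ← hp] at hcombo
  have hsplit : (p * p).trace.re = s * (p * p).trace.re + t * (p * p).trace.re := by
    rw [← add_mul, hst, one_mul]
  have hgap : s * t * ((a - b) * (a - b)).trace.re ≤ 0 := by
    rw [← hcombo]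
    linarith [mul_le_mul_of_nonneg_left hap hs.le, mul_le_mul_of_nonneg_left hbp ht.le]
  exact sub_eq_zero.mp <| (ha.sub hb).eq_zero_of_re_trace_mul_self_nonpos
    (nonpos_of_mul_nonpos_right hgap (mul_pos hs ht))

theorem trace_mul_eq_of_forall_isHermitian {S : Submodule ℂ (Matrix m m ℂ)}
    (hstar : ∀ A ∈ S, Aᴴ ∈ S) {σ τ : Matrix m m ℂ}
    (H : ∀ X ∈ S, X.IsHermitian → (σ * X).trace = (τ * X).trace) {X : Matrix m m ℂ}
    (hX : X ∈ S) : (σ * X).trace = (τ * X).trace := by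
  have hre : (ℜ X : Matrix m m ℂ) ∈ S := by
    rw [realPart_apply_coe, ← Complex.coe_smul]
    exact S.smul_mem _ (S.add_mem hX (hstar X hX))
  have him : (ℑ X : Matrix m m ℂ) ∈ S := by
    rw [imaginaryPart_apply_coe, ← Complex.coe_smul]
    exact S.smul_mem _ (S.smul_mem _ (S.sub_mem hX (hstar X hX)))
  rw [← realPart_add_I_smul_imaginaryPart X]
  simp only [mul_add, Matrix.mul_smul, trace_add, trace_smul,
    H _ hre (isHermitian_iff_isSelfAdjoint.mpr (ℜ X).2),
    H _ him (isHermitian_iff_isSelfAdjoint.mpr (ℑ X).2)]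

theorem eq_of_forall_isHermitian_trace_mul_eq {S : Submodule ℂ (Matrix m m ℂ)}
    {a b : Matrix m m ℂ} (ha : a ∈ S) (hb : b ∈ S) (ha' : a.IsHermitian) (hb' : b.IsHermitian)
    (H : ∀ X ∈ S, X.IsHermitian → (a * X).trace = (b * X).trace) : a = b := by
  have hab : ((a - b) * (a - b)).trace = 0 := by
    rw [sub_mul, trace_sub, H _ (S.sub_mem ha hb) (ha'.sub hb'), sub_self]
  exact sub_eq_zero.mp <| (ha'.sub hb').eq_zero_of_re_trace_mul_self_nonpos (by simp [hab])

end Matrix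

theorem stmt_15_general {n : ℕ} (h : LieSubalgebra ℂ (Matrix (Fin n) (Fin n) ℂ))
    (hstar : ∀ A ∈ h, A.conjTranspose ∈ h)
    (P : Matrix (Fin n) (Fin n) ℂ → Matrix (Fin n) (Fin n) ℂ)
    (hP_mem : ∀ A : Matrix (Fin n) (Fin n) ℂ, A.IsHermitian →
      P A ∈ h ∧ (P A).IsHermitian)
    (hP_orth : ∀ A : Matrix (Fin n) (Fin n) ℂ, A.IsHermitian →
      ∀ X ∈ h, X.IsHermitian → ((A - P A) * X).trace = 0)
    (ρ : Matrix (Fin n) (Fin n) ℂ)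
    (hρ : ρ.PosSemidef) (hρtr : ρ.trace = 1)
    (hmax : ∀ σ : Matrix (Fin n) (Fin n) ℂ, σ.PosSemidef → σ.trace = 1 →
      ((P σ * P σ).trace).re ≤ ((P ρ * P ρ).trace).re) :
    (fun X : h => (ρ * (X : Matrix (Fin n) (Fin n) ℂ)).trace) ∈
      Set.extremePoints ℝ
        {f : h → ℂ | ∃ σ : Matrix (Fin n) (Fin n) ℂ, σ.PosSemidef ∧ σ.trace = 1 ∧
          f = fun X : h => (σ * (X : Matrix (Fin n) (Fin n) ℂ)).trace} := by
  refine ⟨⟨ρ, hρ, hρtr, rfl⟩, ?_⟩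
  rintro _ ⟨σ₁, hσ₁, hσ₁tr, rfl⟩ _ ⟨σ₂, hσ₂, hσ₂tr, rfl⟩ ⟨s, t, hs, ht, hst, hcombo⟩
  have hP_trace : ∀ A, A.IsHermitian → ∀ X ∈ h, X.IsHermitian →
      (A * X).trace = (P A * X).trace := fun A hA X hX hXh =>
    sub_eq_zero.mp (by rw [← trace_sub, ← sub_mul]; exact hP_orth A hA X hX hXh)
  obtain ⟨hPσ₁, hPσ₁'⟩ := hP_mem σ₁ hσ₁.1
  obtain ⟨hPσ₂, hPσ₂'⟩ := hP_mem σ₂ hσ₂.1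
  have hPρ : P ρ = (s : ℂ) • P σ₁ + (t : ℂ) • P σ₂ := by
    refine eq_of_forall_isHermitian_trace_mul_eq (S := h.toSubmodule) (hP_mem ρ hρ.1).1
      (h.add_mem (h.smul_mem _ hPσ₁) (h.smul_mem _ hPσ₂)) (hP_mem ρ hρ.1).2
      ((hPσ₁'.smul (Complex.conj_ofReal s)).add (hPσ₂'.smul (Complex.conj_ofReal t)))
      fun X hX hXh => ?_
    have hval := congrFun hcombo ⟨X, hX⟩
    simp only [Pi.add_apply, Pi.smul_apply, Complex.real_smul] at hval
    rw [← hP_trace ρ hρ.1 X hX hXh, ← hval, add_mul, trace_add, smul_mul, smul_mul, trace_smul,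
      trace_smul, smul_eq_mul, smul_eq_mul, ← hP_trace σ₁ hσ₁.1 X hX hXh,
      ← hP_trace σ₂ hσ₂.1 X hX hXh]
  have hP₁₂ : P σ₁ = P σ₂ := hPσ₁'.eq_of_re_trace_mul_self_le hPσ₂' hs ht hst hPρ
    (hmax σ₁ hσ₁ hσ₁tr) (hmax σ₂ hσ₂ hσ₂tr)
  have hPσ₁ρ : P σ₁ = P ρ := by
    rw [hPρ, ← hP₁₂, ← add_smul, ← Complex.ofReal_add, hst, Complex.ofReal_one, one_smul]
  funext X
  refine trace_mul_eq_of_forall_isHermitian (S := h.toSubmodule) hstar (fun Y hY hYh => ?_) X.2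
  rw [hP_trace σ₁ hσ₁.1 Y hY hYh, hPσ₁ρ, ← hP_trace ρ hρ.1 Y hY hYh]

/-- let `h` be a complex Lie subalgebra of the `n × n` complex
matrices, closed under conjugate transpose, containing the identity, and acting
irreducibly on `ℂⁿ`.  Let `P` be the orthogonal projection (for the trace inner
product on Hermitian matrices) onto the real subspace `Re h` of Hermitian
elements of `h`.  If `ρ` is a density matrix with `tr (ρ²) = 1` of maximal
purity relative to `Re h` among density matrices, then `ρ` is generalized
unentangled relative to `h`: the functional `λ_ρ : X ↦ tr (ρ X)` on `h` is an
extreme point of the set of functionals induced by density matrices. -/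
theorem stmt_15 {n : ℕ} (h : LieSubalgebra ℂ (Matrix (Fin n) (Fin n) ℂ))
    (hstar : ∀ A ∈ h, A.conjTranspose ∈ h)
    (hone : (1 : Matrix (Fin n) (Fin n) ℂ) ∈ h)
    (hirr : ∀ U : Submodule ℂ (Fin n → ℂ),
      (∀ A ∈ h, ∀ v ∈ U, A.mulVec v ∈ U) → U = ⊥ ∨ U = ⊤)
    (P : Matrix (Fin n) (Fin n) ℂ → Matrix (Fin n) (Fin n) ℂ)
    (hP_mem : ∀ A : Matrix (Fin n) (Fin n) ℂ, A.IsHermitian →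
      P A ∈ h ∧ (P A).IsHermitian)
    (hP_orth : ∀ A : Matrix (Fin n) (Fin n) ℂ, A.IsHermitian →
      ∀ X ∈ h, X.IsHermitian → ((A - P A) * X).trace = 0)
    (ρ : Matrix (Fin n) (Fin n) ℂ)
    (hρ : ρ.PosSemidef) (hρtr : ρ.trace = 1)
    (hpure : (ρ * ρ).trace = 1)
    (hmax : ∀ σ : Matrix (Fin n) (Fin n) ℂ, σ.PosSemidef → σ.trace = 1 →
      ((P σ * P σ).trace).re ≤ ((P ρ * P ρ).trace).re) :
    (fun X : h => (ρ * (X : Matrix (Fin n) (Fin n) ℂ)).trace) ∈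
      Set.extremePoints ℝ
        {f : h → ℂ | ∃ σ : Matrix (Fin n) (Fin n) ℂ, σ.PosSemidef ∧ σ.trace = 1 ∧
          f = fun X : h => (σ * (X : Matrix (Fin n) (Fin n) ℂ)).trace} :=
  stmt_15_general h hstar P hP_mem hP_orth ρ hρ hρtr hmax
end
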